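/- arXiv:1710.06750 — 2 statements merged into one kernel-verified Lean document; each statement's English description precedes it below -/
import Mathlib

section
/- Let n, m be natural numbers, let A be an n×n real matrix, C an m×m real matrix, and B an m×n real matrix. Assume A and C are positive semidefinite (symmetric with x ⬝ A x ≥ 0 for all x, resp. y ⬝ C y ≥ 0 for all y), that the only vector x ∈ ℝⁿ with A x = 0 and B x = 0 is x = 0, and that the only vector y ∈ ℝᵐ with C y = 0 and Bᵀ y = 0 is y = 0. Then the (n+m)×(n+m) block matrix [[A, Bᵀ], [−B, C]] is invertible. -/
/-!
Write `M = [[A, Bᵀ], [-B, C]]` and `z = (x, y)`. The skew-symmetric off-diagonal blocks cancel in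
the quadratic form: `z ⬝ M z = x ⬝ A x + y ⬝ C y`. So if `M z = 0`, both nonnegative terms vanish,
which for positive semidefinite `A` and `C` forces `A x = 0` and `C y = 0`. The two block rows of
`M z = 0` then read `Bᵀ y = 0` and `B x = 0`, and the kernel conditions give `x = 0`, `y = 0`.
-/

open Matrix

namespace Matrix

variable {ι κ : Type*} [Fintype ι] [Fintype κ]

theorem isUnit_iff_forall_mulVec_eq_zero {K : Type*} [Field K] [DecidableEq ι]
    {M : Matrix ι ι K} : IsUnit M ↔ ∀ v, M *ᵥ v = 0 → v = 0 := by
  rw [← mulVec_injective_iff_isUnit, ← coe_mulVecLin, ← LinearMap.ker_eq_bot,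
    ker_mulVecLin_eq_bot_iff]
  rfl

theorem posSemidef_of_isSymm_of_dotProduct_mulVec_nonneg {A : Matrix ι ι ℝ} (hA : A.IsSymm)
    (hA_nonneg : ∀ x, 0 ≤ x ⬝ᵥ A *ᵥ x) : A.PosSemidef :=
  .of_dotProduct_mulVec_nonneg (isHermitian_iff_isSymm.mpr hA) hA_nonneg

theorem sumElim_dotProduct_fromBlocks_mulVec_sumElim {R : Type*} [CommRing R]
    (A : Matrix ι ι R) (B : Matrix κ ι R) (C : Matrix κ κ R) (x : ι → R) (y : κ → R) :
    Sum.elim x y ⬝ᵥ fromBlocks A Bᵀ (-B) C *ᵥ Sum.elim x y = x ⬝ᵥ A *ᵥ x + y ⬝ᵥ C *ᵥ y := by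
  have h_cross : x ⬝ᵥ Bᵀ *ᵥ y = y ⬝ᵥ B *ᵥ x := by
    rw [dotProduct_mulVec, vecMul_transpose, dotProduct_comm]
  simp only [fromBlocks_mulVec, Sum.elim_comp_inl, Sum.elim_comp_inr, sumElim_dotProduct_sumElim,
    dotProduct_add, neg_mulVec, dotProduct_neg, h_cross]
  abel

theorem mulVec_eq_zero_of_fromBlocks_mulVec_sumElim_eq_zero {A : Matrix ι ι ℝ}
    {B : Matrix κ ι ℝ} {C : Matrix κ κ ℝ} (hA : A.PosSemidef) (hC : C.PosSemidef)
    {x : ι → ℝ} {y : κ → ℝ} (h : fromBlocks A Bᵀ (-B) C *ᵥ Sum.elim x y = 0) :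
    A *ᵥ x = 0 ∧ C *ᵥ y = 0 := by
  have h_form : x ⬝ᵥ A *ᵥ x + y ⬝ᵥ C *ᵥ y = 0 := by
    rw [← sumElim_dotProduct_fromBlocks_mulVec_sumElim, h, dotProduct_zero]
  obtain ⟨hx, hy⟩ := (add_eq_zero_iff_of_nonneg (hA.dotProduct_mulVec_nonneg x)
    (hC.dotProduct_mulVec_nonneg y)).mp h_form
  exact ⟨(hA.dotProduct_mulVec_zero_iff x).mp hx, (hC.dotProduct_mulVec_zero_iff y).mp hy⟩

end Matrix

/-- Lemma 3.4: if `A` and `C` are positive semidefinite, and the kernels of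
`A` and `B` (resp. `C` and `Bᵀ`) intersect trivially, then the block matrix
`[[A, Bᵀ], [-B, C]]` is invertible. -/
theorem block_matrix_invertible (n m : ℕ)
    (A : Matrix (Fin n) (Fin n) ℝ) (C : Matrix (Fin m) (Fin m) ℝ)
    (B : Matrix (Fin m) (Fin n) ℝ)
    (hAsymm : A.IsSymm) (hApsd : ∀ x : Fin n → ℝ, 0 ≤ x ⬝ᵥ A.mulVec x)
    (hCsymm : C.IsSymm) (hCpsd : ∀ y : Fin m → ℝ, 0 ≤ y ⬝ᵥ C.mulVec y)
    (hkerAB : ∀ x : Fin n → ℝ, A.mulVec x = 0 → B.mulVec x = 0 → x = 0)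
    (hkerCBT : ∀ y : Fin m → ℝ, C.mulVec y = 0 → Bᵀ.mulVec y = 0 → y = 0) :
    IsUnit (Matrix.fromBlocks A Bᵀ (-B) C) := by
  have hA := posSemidef_of_isSymm_of_dotProduct_mulVec_nonneg hAsymm hApsd
  have hC := posSemidef_of_isSymm_of_dotProduct_mulVec_nonneg hCsymm hCpsd
  refine isUnit_iff_forall_mulVec_eq_zero.mpr fun z hz ↦ ?_
  rw [← Sum.elim_comp_inl_inr z] at hz ⊢
  set x := z ∘ Sum.inl
  set y := z ∘ Sum.inr
  obtain ⟨hAx, hCy⟩ := mulVec_eq_zero_of_fromBlocks_mulVec_sumElim_eq_zero hA hC hz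
  obtain ⟨hBTy, hBx⟩ : Bᵀ *ᵥ y = 0 ∧ B *ᵥ x = 0 := by
    rw [fromBlocks_mulVec, ← Sum.elim_zero_zero, Sum.elim_eq_iff] at hz
    simpa [hAx, hCy, neg_mulVec] using hz
  rw [hkerAB x hAx hBx, hkerCBT y hCy hBTy, Sum.elim_zero_zero]
end

section
/- Let V and Q be finite-dimensional real inner product spaces, and let a : V × V → ℝ, b : V × Q → ℝ, c : Q × Q → ℝ be bilinear maps. Assume: (i) a is coercive, i.e. there exists α > 0 with a(v, v) ≥ α‖v‖² for all v ∈ V; (ii) c is symmetric and positive semidefinite, i.e. c(p, q) = c(q, p) and c(q, q) ≥ 0 for all p, q ∈ Q; (iii) if q ∈ Q satisfies b(v, q) = 0 for all v ∈ V and c(q', q) = 0 for all q' ∈ Q, then q = 0. Then for every pair of linear functionals f ∈ V* and g ∈ Q* there exists a unique pair (u, p) ∈ V × Q such that a(u, v) + b(v, p) = f(v) for all v ∈ V and −b(u, q) + c(p, q) = g(q) for all q ∈ Q. -/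
/-- Abstract well-posedness of the saddle-point problem: with `a` coercive,
`c` symmetric positive semidefinite, and the kernel condition on `b` and `c`,
for every data `(f, g)` there is a unique solution `(u, p)`. -/
theorem saddle_point_wellposed {V Q : Type*}
    [NormedAddCommGroup V] [InnerProductSpace ℝ V] [FiniteDimensional ℝ V]
    [NormedAddCommGroup Q] [InnerProductSpace ℝ Q] [FiniteDimensional ℝ Q]
    (a : V →ₗ[ℝ] V →ₗ[ℝ] ℝ) (b : V →ₗ[ℝ] Q →ₗ[ℝ] ℝ) (c : Q →ₗ[ℝ] Q →ₗ[ℝ] ℝ)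
    (α : ℝ) (hα : 0 < α) (hcoer : ∀ v : V, α * ‖v‖ ^ 2 ≤ a v v)
    (hcsymm : ∀ p q : Q, c p q = c q p) (hcpsd : ∀ q : Q, 0 ≤ c q q)
    (hker : ∀ q : Q, (∀ v : V, b v q = 0) → (∀ q' : Q, c q' q = 0) → q = 0) :
    ∀ (f : V →ₗ[ℝ] ℝ) (g : Q →ₗ[ℝ] ℝ),
      ∃! up : V × Q,
        (∀ v : V, a up.1 v + b v up.2 = f v) ∧
        (∀ q : Q, -(b up.1 q) + c up.2 q = g q) := by
  intro f g
  set L : V × Q →ₗ[ℝ] (V →ₗ[ℝ] ℝ) × (Q →ₗ[ℝ] ℝ) :=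
    LinearMap.prod
      (a.comp (LinearMap.fst ℝ V Q) + b.flip.comp (LinearMap.snd ℝ V Q))
      (-(b.comp (LinearMap.fst ℝ V Q)) + c.comp (LinearMap.snd ℝ V Q)) with hL
  have hL1 : ∀ (u : V) (p : Q) (v : V), (L (u, p)).1 v = a u v + b v p := by
    intro u p v; simp [hL]
  have hL2 : ∀ (u : V) (p : Q) (q : Q), (L (u, p)).2 q = -(b u q) + c p q := by
    intro u p q; simp [hL]
  have hinj : Function.Injective L := by
    rw [← LinearMap.ker_eq_bot, LinearMap.ker_eq_bot']
    rintro ⟨u, p⟩ h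
    have h1 : ∀ v : V, a u v + b v p = 0 := by
      intro v
      have := congrArg (fun z => z.1 v) h
      simpa [hL1] using this
    have h2 : ∀ q : Q, -(b u q) + c p q = 0 := by
      intro q
      have := congrArg (fun z => z.2 q) h
      simpa [hL2] using this
    have hsum : a u u + c p p = 0 := by
      have e1 := h1 u
      have e2 := h2 p
      linarith
    have hu : u = 0 := by
      have h0 : a u u ≤ 0 := by linarith [hcpsd p]
      have hs : α * ‖u‖ ^ 2 ≤ 0 := (hcoer u).trans h0
      have hnn : (0:ℝ) ≤ α * ‖u‖ ^ 2 := mul_nonneg hα.le (sq_nonneg _)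
      have h3 : ‖u‖ ^ 2 = 0 := by
        rcases mul_eq_zero.mp (le_antisymm hs hnn) with h | h
        · exact absurd h hα.ne'
        · exact h
      exact norm_eq_zero.mp (sq_eq_zero_iff.mp h3)
    have hp : p = 0 := by
      apply hker p
      · intro v
        have := h1 v
        simpa [hu] using this
      · intro q'
        have := h2 q'
        rw [hcsymm q' p]
        simpa [hu] using this
    simp [hu, hp]
  have hsurj : Function.Surjective L := by
    have hdim : Module.finrank ℝ (V × Q)
        = Module.finrank ℝ ((V →ₗ[ℝ] ℝ) × (Q →ₗ[ℝ] ℝ)) := by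
      simp [Module.finrank_prod,
        Subspace.dual_finrank_eq]
    exact (LinearMap.injective_iff_surjective_of_finrank_eq_finrank hdim).mp hinj
  obtain ⟨up, hup⟩ := hsurj (f, g)
  refine ⟨up, ⟨?_, ?_⟩, ?_⟩
  · intro v
    have := congrArg (fun z => z.1 v) hup
    simpa [hL1 up.1 up.2 v] using this
  · intro q
    have := congrArg (fun z => z.2 q) hup
    simpa [hL2 up.1 up.2 q] using this
  · rintro ⟨u', p'⟩ ⟨h1', h2'⟩
    apply hinj
    rw [hup]
    ext x
    · simpa [hL1] using h1' x
    · simpa [hL2] using h2' x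
end
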